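/- If G is a K_{1,r}-free graph with r ≥ 3, then i(G) ≤ (r − 2)(γ(G) − 1) + 1. -/

import Mathlib

open SimpleGraph

variable {V : Type*}

/-- The closed neighborhood `N[S]` of a set of vertices. -/
def closedNbhd (G : SimpleGraph V) (S : Set V) : Set V :=
  {v | v ∈ S ∨ ∃ u ∈ S, G.Adj u v}

/-- The open neighborhood `N(S)` of a set of vertices. -/
def openNbhd (G : SimpleGraph V) (S : Set V) : Set V :=
  {v | ∃ u ∈ S, G.Adj u v}

/-- A set is independent if no two of its vertices are adjacent. -/
def IsIndep (G : SimpleGraph V) (S : Set V) : Prop :=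
  S.Pairwise fun u w => ¬ G.Adj u w

/-- `S` is `K_k`-isolating: `G - N[S]` contains no clique of size `k`. -/
def IsIsolating (G : SimpleGraph V) (k : ℕ) (S : Set V) : Prop :=
  ∀ T : Finset V, (↑T : Set V) ∩ closedNbhd G S = ∅ → G.IsClique ↑T → T.card ≠ k

/-- The `K_k`-isolation number `ι_k(G)`. -/
noncomputable def iota [Fintype V] (G : SimpleGraph V) (k : ℕ) : ℕ :=
  sInf {n | ∃ S : Finset V, S.card = n ∧ IsIsolating G k ↑S}

/-- The independent `K_k`-isolation number `ι'_k(G)`. -/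
noncomputable def iota' [Fintype V] (G : SimpleGraph V) (k : ℕ) : ℕ :=
  sInf {n | ∃ S : Finset V, S.card = n ∧ IsIsolating G k ↑S ∧ IsIndep G ↑S}

/-- A dominating set: every vertex lies in `N[S]`. -/
def IsDominating (G : SimpleGraph V) (S : Set V) : Prop :=
  ∀ v, v ∈ closedNbhd G S

/-- The domination number `γ(G)`. -/
noncomputable def gammaNum [Fintype V] (G : SimpleGraph V) : ℕ :=
  sInf {n | ∃ S : Finset V, S.card = n ∧ IsDominating G ↑S}

/-- The independent domination number `i(G)`. -/
noncomputable def iNum [Fintype V] (G : SimpleGraph V) : ℕ :=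
  sInf {n | ∃ S : Finset V, S.card = n ∧ IsDominating G ↑S ∧ IsIndep G ↑S}

/-- `G` is `K_{1,r}`-free: no induced subgraph isomorphic to the star `K_{1,r}`. -/
def K1rFree (G : SimpleGraph V) (r : ℕ) : Prop :=
  IsEmpty (completeBipartiteGraph (Fin 1) (Fin r) ↪g G)

/-- Degree of `v` inside the vertex subset `T`. -/
def degIn [DecidableEq V] (G : SimpleGraph V) [DecidableRel G.Adj] (T : Finset V) (v : V) : ℕ :=
  (T.filter (G.Adj v)).card


/-!
Take a minimum dominating set `D` and build an independent set `I` with `N[D] ⊆ N[I]` by treating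
the vertices `x` of `D` in turn. If `x ∉ N[I]`, add `x`. Otherwise add a maximal independent subset
`M` of `N[x] ∖ N[I]`: it lies in `N(x)` and together with a neighbour of `x` in `I` it is an
independent set in `N(x)`, so `K_{1,r}`-freeness gives `|M| ≤ r - 2`. Hence
`i(G) ≤ |I| ≤ 1 + (r - 2)(γ(G) - 1)`.
-/

section

variable {G : SimpleGraph V}

lemma closedNbhd_mono {S T : Set V} (h : S ⊆ T) : closedNbhd G S ⊆ closedNbhd G T := by
  rintro v (hv | ⟨u, hu, hadj⟩)
  · exact Or.inl (h hv)
  · exact Or.inr ⟨u, h hu, hadj⟩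

lemma closedNbhd_union (S T : Set V) :
    closedNbhd G (S ∪ T) = closedNbhd G S ∪ closedNbhd G T := by
  ext v
  simp only [closedNbhd, Set.mem_union, Set.mem_ofPred_eq, or_and_right, exists_or]
  exact or_or_or_comm

lemma IsIndep.union {I M : Set V} (hI : IsIndep G I) (hM : IsIndep G M)
    (hMI : ∀ m ∈ M, m ∉ closedNbhd G I) : IsIndep G (I ∪ M) := by
  rintro a (ha | ha) b (hb | hb) hne hadj
  · exact hI ha hb hne hadj
  · exact hMI b hb (Or.inr ⟨a, ha, hadj⟩)
  · exact hMI a ha (Or.inr ⟨b, hb, hadj.symm⟩)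
  · exact hM ha hb hne hadj

lemma exists_isIndep_subset_closedNbhd (A : Finset V) :
    ∃ M ⊆ A, IsIndep G ↑M ∧ ↑A ⊆ closedNbhd G ↑M := by
  classical
  obtain ⟨M, hM⟩ := (A.powerset.filter fun S : Finset V => IsIndep G ↑S).exists_maximal
    ⟨∅, Finset.mem_filter.2 ⟨Finset.empty_mem_powerset A, by simp [IsIndep]⟩⟩
  obtain ⟨hMA, hMind⟩ : M ⊆ A ∧ IsIndep G ↑M := by
    simpa only [Finset.mem_filter, Finset.mem_powerset] using hM.prop
  refine ⟨M, hMA, hMind, fun v hvA => ?_⟩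
  by_contra hv
  have hvM : v ∉ M := fun h => hv (Or.inl h)
  have hins : insert v M ∈ A.powerset.filter fun S : Finset V => IsIndep G ↑S := by
    refine Finset.mem_filter.2 ⟨Finset.mem_powerset.2 (Finset.insert_subset hvA hMA), ?_⟩
    rw [Finset.coe_insert]
    exact hMind.insert fun m hm _ =>
      ⟨fun hadj => hv (Or.inr ⟨m, hm, hadj.symm⟩), fun hadj => hv (Or.inr ⟨m, hm, hadj⟩)⟩
  exact hvM (hM.2 hins (Finset.subset_insert v M) (Finset.mem_insert_self v M))

lemma K1rFree.card_lt {r : ℕ} (hfree : K1rFree G r) {x : V} {L : Finset V}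
    (hadj : ∀ m ∈ L, G.Adj x m) (hL : IsIndep G ↑L) : L.card < r := by
  by_contra! h
  let f : Fin r ↪ V := (Fin.castLEEmb h).trans
    (L.equivFin.symm.toEmbedding.trans (Function.Embedding.subtype _))
  have hfL : ∀ i, f i ∈ L := fun i => (L.equivFin.symm _).2
  have hxf : ∀ i, x ≠ f i := fun i => (hadj _ (hfL i)).ne
  refine hfree.false ⟨⟨Sum.elim (fun _ => x) f,
    (Function.injective_of_subsingleton _).sumElim f.injective fun _ i => hxf i⟩, ?_⟩
  rintro (i | i) (j | j)
  · simp
  · simpa using hadj _ (hfL j)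
  · simpa using (hadj _ (hfL i)).symm
  · refine iff_of_false (fun hij => ?_) (by simp)
    exact hL (hfL i) (hfL j) (fun he => G.ne_of_adj hij he) hij

lemma K1rFree.exists_extension_of_mem_closedNbhd [Fintype V] {r : ℕ}
    (hfree : K1rFree G r) {I : Set V} {x : V} (hx : x ∈ closedNbhd G I) :
    ∃ M : Finset V, IsIndep G ↑M ∧ (∀ m ∈ M, m ∉ closedNbhd G I) ∧ M.card ≤ r - 2 ∧
      closedNbhd G {x} ⊆ closedNbhd G (I ∪ ↑M) := by
  classical
  obtain ⟨M, hMA, hMind, hAM⟩ := exists_isIndep_subset_closedNbhd (G := G)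
    (Finset.univ.filter fun v => v ∈ closedNbhd G {x} ∧ v ∉ closedNbhd G I)
  have hMx : ∀ m ∈ M, m ∈ closedNbhd G {x} ∧ m ∉ closedNbhd G I := fun m hm => by
    simpa using hMA hm
  refine ⟨M, hMind, fun m hm => (hMx m hm).2, ?_, fun v hv => ?_⟩
  · rcases hx with hxI | ⟨u, huI, hux⟩
    · have hxI' := closedNbhd_mono (G := G) (Set.singleton_subset_iff.2 hxI)
      have hM : M = ∅ := Finset.eq_empty_of_forall_notMem fun m hm =>
        (hMx m hm).2 (hxI' (hMx m hm).1)
      simp [hM]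
    · have hxM : ∀ m ∈ M, G.Adj x m := fun m hm => by
        obtain ⟨h1 | ⟨w, hw, hadj⟩, h2⟩ := hMx m hm
        · exact absurd (Or.inr ⟨u, huI, Set.mem_singleton_iff.1 h1 ▸ hux⟩) h2
        · exact Set.mem_singleton_iff.1 hw ▸ hadj
      have huM : u ∉ M := fun h => (hMx u h).2 (Or.inl huI)
      have hcard := hfree.card_lt (x := x) (L := insert u M)
        (Finset.forall_mem_insert _ _ _ |>.2 ⟨hux.symm, hxM⟩)
        (by
          rw [Finset.coe_insert]
          exact hMind.insert fun m hm _ =>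
            ⟨fun hadj => (hMx m hm).2 (Or.inr ⟨u, huI, hadj⟩),
              fun hadj => (hMx m hm).2 (Or.inr ⟨u, huI, hadj.symm⟩)⟩)
      rw [Finset.card_insert_of_notMem huM] at hcard
      omega
  · by_cases hvI : v ∈ closedNbhd G I
    · exact closedNbhd_mono Set.subset_union_left hvI
    · exact closedNbhd_mono Set.subset_union_right (hAM (by simp [hv, hvI]))

lemma K1rFree.exists_extension [Fintype V] {r : ℕ} (hr : 3 ≤ r)
    (hfree : K1rFree G r) (I : Set V) (x : V) :
    ∃ M : Finset V, IsIndep G ↑M ∧ (∀ m ∈ M, m ∉ closedNbhd G I) ∧ M.card ≤ r - 2 ∧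
      closedNbhd G {x} ⊆ closedNbhd G (I ∪ ↑M) := by
  by_cases hx : x ∈ closedNbhd G I
  · exact hfree.exists_extension_of_mem_closedNbhd hx
  · refine ⟨{x}, by simp [IsIndep], by simpa using hx, by simp; omega, ?_⟩
    exact closedNbhd_mono (by simp)

theorem K1rFree.exists_isIndep_closedNbhd_subset [Fintype V] {r : ℕ} (hr : 3 ≤ r)
    (hfree : K1rFree G r) (D : Finset V) :
    ∃ I : Finset V, IsIndep G ↑I ∧ closedNbhd G ↑D ⊆ closedNbhd G ↑I ∧
      I.card ≤ (r - 2) * (D.card - 1) + 1 := by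
  classical
  rcases D.eq_empty_or_nonempty with rfl | hD
  · exact ⟨∅, by simp [IsIndep], subset_rfl, by simp⟩
  induction hD using Finset.Nonempty.cons_induction with
  | singleton x => exact ⟨{x}, by simp [IsIndep], subset_rfl, by simp⟩
  | cons x D hxD hD ih =>
    obtain ⟨I, hI, hDI, hIcard⟩ := ih
    obtain ⟨M, hM, hMI, hMcard, hxM⟩ := hfree.exists_extension hr (↑I) x
    refine ⟨I ∪ M, ?_, ?_, ?_⟩
    · rw [Finset.coe_union]
      exact hI.union hM hMI
    · rw [Finset.coe_cons, Set.insert_eq, closedNbhd_union, Finset.coe_union]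
      exact Set.union_subset hxM (hDI.trans (closedNbhd_mono Set.subset_union_left))
    · obtain ⟨k, hk⟩ := Nat.exists_eq_succ_of_ne_zero hD.card_pos.ne'
      have := Finset.card_union_le I M
      rw [Finset.card_cons, hk, Nat.add_sub_cancel, Nat.mul_succ]
      rw [hk, Nat.succ_sub_one] at hIcard
      omega

end

/-- For K_{1,r}-free graphs, i(G) ≤ (r − 2)(γ(G) − 1) + 1. -/
theorem stmt_6 [Fintype V] (G : SimpleGraph V) (r : ℕ) (hr : 3 ≤ r)
    (hfree : K1rFree G r) :
    iNum G ≤ (r - 2) * (gammaNum G - 1) + 1 := by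
  obtain ⟨D, hDcard, hDdom⟩ : ∃ D : Finset V, D.card = gammaNum G ∧ IsDominating G ↑D :=
    Nat.sInf_mem (s := {n | ∃ S : Finset V, S.card = n ∧ IsDominating G ↑S})
      ⟨_, Finset.univ, rfl, fun v => Or.inl (Finset.mem_coe.2 (Finset.mem_univ v))⟩
  obtain ⟨I, hI, hDI, hIcard⟩ := hfree.exists_isIndep_closedNbhd_subset hr D
  calc iNum G ≤ I.card := Nat.sInf_le ⟨I, rfl, fun v => hDI (hDdom v), hI⟩
    _ ≤ (r - 2) * (gammaNum G - 1) + 1 := hDcard ▸ hIcard
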